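/- arXiv:1612.07936 — 5 statements merged into one kernel-verified Lean document; each statement's English description precedes it below -/
import Mathlib

section
/- Let g : [0,1] → ℝ be a function with ∫₀¹ s^k (g(s)² + g'(s)²) ds < ∞ for some real k > 1. Then there exists a constant C depending only on k such that ∫₀¹ s^{k-2} g(s)² ds ≤ C ∫₀¹ s^k (g(s)² + g'(s)²) ds. -/
/-!
The weight `w s = s ^ (k - 1) * (1 - s ^ 2)` vanishes at both ends of `[0, 1]`, so
`∫₀¹ (w g²)' = 0`. Expanding the derivative,
`(k - 1) ∫ s^(k-2) g² = (k + 1) ∫ s^k g² - 2 ∫ s^(k-1) (1 - s²) g g'`,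
and the cross term is absorbed by AM-GM,
`2 s^(k-1) |g g'| ≤ (k - 1)/2 · s^(k-2) g² + 2/(k - 1) · s^k g'²`.
Everything is integrable on `[0, 1]` because `k - 2 > -1` and `g`, `g'` are continuous.
-/

open MeasureTheory Set intervalIntegral

/-- `s ^ (k - 2) * hardyRemainder k s (g s) (g' s)` is the derivative of
`s ^ (k - 1) * (1 - s ^ 2) * g s ^ 2`. -/
def hardyRemainder (k s p q : ℝ) : ℝ :=
  ((k - 1) - (k + 1) * s ^ 2) * p ^ 2 + 2 * s * (1 - s ^ 2) * p * q

theorem neg_two_mul_mul_mul_le {c t p q : ℝ} (hc : 0 < c) (ht : t ^ 2 ≤ 1) :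
    -(2 * t * p * q) ≤ c / 2 * p ^ 2 + 2 / c * q ^ 2 := by
  have key : c / 2 * (c / 2 * p ^ 2 + 2 / c * q ^ 2 + 2 * t * p * q)
      = (c / 2 * p + t * q) ^ 2 + (1 - t ^ 2) * q ^ 2 := by
    field_simp
    ring
  have : 0 ≤ c / 2 * (c / 2 * p ^ 2 + 2 / c * q ^ 2 + 2 * t * p * q) := by
    rw [key]
    nlinarith [sq_nonneg (c / 2 * p + t * q), sq_nonneg q]
  nlinarith [(mul_nonneg_iff_of_pos_left (half_pos hc)).1 this]

theorem sq_le_hardyRemainder {k s p q : ℝ} (hk : 1 < k) (hs : s ∈ Icc (0 : ℝ) 1) :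
    p ^ 2 ≤ 2 / (k - 1) * hardyRemainder k s p q
      + 2 / (k - 1) * (k + 1 + 2 / (k - 1)) * (s ^ 2 * (p ^ 2 + q ^ 2)) := by
  have hc : 0 < k - 1 := sub_pos.2 hk
  have ht : (1 - s ^ 2) ^ 2 ≤ 1 := by
    have : s ^ 2 ≤ 1 := pow_le_one₀ hs.1 hs.2
    nlinarith [sq_nonneg s]
  have hcross : 0 ≤ (k - 1) / 2 * p ^ 2 + 2 / (k - 1) * (s * q) ^ 2
      + 2 * (1 - s ^ 2) * p * (s * q) := by
    linarith [neg_two_mul_mul_mul_le (p := p) (q := s * q) hc ht]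
  have hrest : 0 ≤ 2 / (k - 1) * (s * p) ^ 2 + (k + 1) * (s * q) ^ 2 := by
    have : 0 < k + 1 := by linarith
    positivity
  have hsplit : 2 / (k - 1) * hardyRemainder k s p q
      + 2 / (k - 1) * (k + 1 + 2 / (k - 1)) * (s ^ 2 * (p ^ 2 + q ^ 2)) - p ^ 2
      = 2 / (k - 1) * ((k - 1) / 2 * p ^ 2 + 2 / (k - 1) * (s * q) ^ 2
          + 2 * (1 - s ^ 2) * p * (s * q))
        + 2 / (k - 1) * (2 / (k - 1) * (s * p) ^ 2 + (k + 1) * (s * q) ^ 2) := by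
    unfold hardyRemainder
    field_simp
    ring
  nlinarith [div_pos two_pos hc]

theorem hasDerivAt_rpow_mul_one_sub_sq_mul_sq {k x g'x : ℝ} {g : ℝ → ℝ} (hx : x ≠ 0)
    (hg : HasDerivAt g g'x x) :
    HasDerivAt (fun s => s ^ (k - 1) * ((1 - s ^ 2) * g s ^ 2))
      (x ^ (k - 2) * hardyRemainder k x (g x) g'x) x := by
  have hpow := Real.hasDerivAt_rpow_const (x := x) (p := k - 1) (Or.inl hx)
  have hsq := (((hasDerivAt_id' x).fun_pow 2).const_sub 1).fun_mul (hg.fun_pow 2)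
  refine (hpow.fun_mul hsq).congr_deriv ?_
  rw [show k - 1 = (k - 2) + 1 by ring, Real.rpow_add_one hx,
    show k - 2 + 1 - 1 = k - 2 by ring, hardyRemainder]
  push_cast
  ring

theorem integral_rpow_mul_hardyRemainder_eq_zero {k : ℝ} (hk : 1 < k) {g g' : ℝ → ℝ}
    (hg : ContinuousOn g (Icc 0 1)) (hg' : ContinuousOn g' (Icc 0 1))
    (hderiv : ∀ x ∈ Ioo (0 : ℝ) 1, HasDerivAt g (g' x) x) :
    ∫ s in (0 : ℝ)..1, s ^ (k - 2) * hardyRemainder k s (g s) (g' s) = 0 := by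
  have hF : ContinuousOn (fun s => s ^ (k - 1) * ((1 - s ^ 2) * g s ^ 2)) (Icc 0 1) :=
    ((continuous_id.rpow_const fun _ => Or.inr (sub_pos.2 hk).le).continuousOn).mul
      ((continuousOn_const.sub (continuousOn_id.pow 2)).mul (hg.pow 2))
  have hint : IntervalIntegrable
      (fun s => s ^ (k - 2) * hardyRemainder k s (g s) (g' s)) volume 0 1 :=
    (intervalIntegrable_rpow' (by linarith)).mul_continuousOn
      (by rw [uIcc_of_le zero_le_one]; unfold hardyRemainder; fun_prop)
  rw [integral_eq_sub_of_hasDerivAt_of_le zero_le_one hF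
    (fun x hx => hasDerivAt_rpow_mul_one_sub_sq_mul_sq hx.1.ne' (hderiv x hx)) hint]
  simp [Real.zero_rpow (sub_pos.2 hk).ne']

theorem integral_rpow_sub_two_mul_sq_le {k : ℝ} (hk : 1 < k) {g g' : ℝ → ℝ}
    (hg : ContinuousOn g (Icc 0 1)) (hg' : ContinuousOn g' (Icc 0 1))
    (hderiv : ∀ x ∈ Ioo (0 : ℝ) 1, HasDerivAt g (g' x) x) :
    ∫ s in (0 : ℝ)..1, s ^ (k - 2) * g s ^ 2
      ≤ 2 / (k - 1) * (k + 1 + 2 / (k - 1)) *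
        ∫ s in (0 : ℝ)..1, s ^ k * (g s ^ 2 + g' s ^ 2) := by
  set C := 2 / (k - 1) * (k + 1 + 2 / (k - 1))
  set R : ℝ → ℝ := fun s => s ^ (k - 2) * hardyRemainder k s (g s) (g' s)
  have hIcc : uIcc (0 : ℝ) 1 = Icc 0 1 := uIcc_of_le zero_le_one
  have hR : IntervalIntegrable R volume 0 1 :=
    (intervalIntegrable_rpow' (by linarith)).mul_continuousOn
      (by rw [hIcc]; unfold hardyRemainder; fun_prop)
  have hφ : IntervalIntegrable (fun s => s ^ k * (g s ^ 2 + g' s ^ 2)) volume 0 1 :=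
    (intervalIntegrable_rpow' (by linarith)).mul_continuousOn (by rw [hIcc]; fun_prop)
  have hψ : IntervalIntegrable (fun s => s ^ (k - 2) * g s ^ 2) volume 0 1 :=
    (intervalIntegrable_rpow' (by linarith)).mul_continuousOn (by rw [hIcc]; fun_prop)
  calc ∫ s in (0 : ℝ)..1, s ^ (k - 2) * g s ^ 2
      ≤ ∫ s in (0 : ℝ)..1, 2 / (k - 1) * R s + C * (s ^ k * (g s ^ 2 + g' s ^ 2)) := by
        refine integral_mono_on zero_le_one hψ ((hR.const_mul _).add (hφ.const_mul _))
          fun s hs => ?_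
        rw [show k = (k - 2) + 2 by ring, Real.rpow_add' hs.1 (by linarith), Real.rpow_two,
          show k - 2 + 2 - 2 = k - 2 by ring, show k - 2 + 2 = k by ring]
        refine (mul_le_mul_of_nonneg_left (sq_le_hardyRemainder (q := g' s) hk hs)
          (Real.rpow_nonneg hs.1 (k - 2))).trans_eq ?_
        ring
    _ = C * ∫ s in (0 : ℝ)..1, s ^ k * (g s ^ 2 + g' s ^ 2) := by
        rw [integral_add (hR.const_mul _) (hφ.const_mul _), intervalIntegral.integral_const_mul,
          intervalIntegral.integral_const_mul,
          integral_rpow_mul_hardyRemainder_eq_zero hk hg hg' hderiv, mul_zero, zero_add]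

/-- Weighted Hardy inequality: for `k > 1` there is a constant `C` (depending only on `k`)
such that for every `C¹` function `g` on `[0,1]` with
`∫₀¹ s^k (g² + g'²) ds < ∞`, one has `∫₀¹ s^(k-2) g² ds ≤ C ∫₀¹ s^k (g² + g'²) ds`. -/
theorem hardy_weighted_inequality (k : ℝ) (hk : 1 < k) :
    ∃ C > 0, ∀ g : ℝ → ℝ, ContDiffOn ℝ 1 g (Set.Icc 0 1) →
      IntervalIntegrable (fun s => s ^ k * ((g s) ^ 2 + (deriv g s) ^ 2)) volume 0 1 →
      ∫ s in (0:ℝ)..1, s ^ (k - 2) * (g s) ^ 2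
        ≤ C * ∫ s in (0:ℝ)..1, s ^ k * ((g s) ^ 2 + (deriv g s) ^ 2) := by
  have hc : 0 < 2 / (k - 1) := div_pos two_pos (sub_pos.2 hk)
  refine ⟨2 / (k - 1) * (k + 1 + 2 / (k - 1)), mul_pos hc (by linarith), fun g hg _ => ?_⟩
  have hderiv : ∀ x ∈ Ioo (0 : ℝ) 1, HasDerivAt g (derivWithin g (Icc 0 1) x) x := fun x hx =>
    (hg.differentiableOn one_ne_zero x (Ioo_subset_Icc_self hx)).hasDerivWithinAt.hasDerivAt
      (Icc_mem_nhds hx.1 hx.2)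
  have hderivWithin : ∫ s in (0 : ℝ)..1, s ^ k * (g s ^ 2 + deriv g s ^ 2)
      = ∫ s in (0 : ℝ)..1, s ^ k * (g s ^ 2 + derivWithin g (Icc 0 1) s ^ 2) := by
    simp only [integral_of_le zero_le_one, integral_Ioc_eq_integral_Ioo]
    exact setIntegral_congr_fun measurableSet_Ioo fun x hx => by rw [(hderiv x hx).deriv]
  rw [hderivWithin]
  exact integral_rpow_sub_two_mul_sq_le hk hg.continuousOn
    (hg.continuousOn_derivWithin (uniqueDiffOn_Icc zero_lt_one) le_rfl) hderiv
end

section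
/- Let g : [0,1] → ℝ be a C¹ function with g(1) = 0. Then there exists a universal constant C such that ∫₀¹ s² g(s)² ds ≤ C ∫₀¹ s² g'(s)² ds. -/
/-!
Hardy's trick: with `F s = s³ g(s)²` one has `F' = 3 s² g² + 2 s³ g g'` and `∫₀¹ F' = 0`, since
`F` vanishes at both ends. Completing the square, `s² g² - (2/3) F' = (4/9) s⁴ g'² - s² (g + (2/3) s g')²`,
so integrating gives `∫₀¹ s² g² ≤ (4/9) ∫₀¹ s⁴ g'² ≤ (4/9) ∫₀¹ s² g'²`.
-/

open MeasureTheory intervalIntegral Set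

lemma pow_mul_sq_le_of_nonneg (n : ℕ) {s : ℝ} (hs : 0 ≤ s) (x y : ℝ) :
    s ^ n * x ^ 2 ≤ 2 / (n + 1) * ((n + 1) * s ^ n * x ^ 2 + 2 * s ^ (n + 1) * x * y) +
      (2 / (n + 1)) ^ 2 * (s ^ (n + 2) * y ^ 2) := by
  have hsq : 2 / (n + 1) * ((n + 1) * s ^ n * x ^ 2 + 2 * s ^ (n + 1) * x * y) +
      (2 / (n + 1)) ^ 2 * (s ^ (n + 2) * y ^ 2) - s ^ n * x ^ 2 =
        s ^ n * (x + 2 / (n + 1) * s * y) ^ 2 := by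
    field_simp
    ring
  linarith [mul_nonneg (pow_nonneg hs n) (sq_nonneg (x + 2 / (n + 1) * s * y))]

section Hardy

variable {g g' : ℝ → ℝ} {b : ℝ}

lemma integral_deriv_pow_succ_mul_sq_eq_zero (n : ℕ) (hb : 0 ≤ b)
    (hg : ContinuousOn g (Icc 0 b)) (hg' : ContinuousOn g' (Icc 0 b))
    (hderiv : ∀ x ∈ Ioo 0 b, HasDerivAt g (g' x) x) (hgb : g b = 0) :
    ∫ s in 0..b, ((n + 1) * s ^ n * g s ^ 2 + 2 * s ^ (n + 1) * g s * g' s) = 0 := by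
  have hF'int : IntervalIntegrable
      (fun s => (n + 1) * s ^ n * g s ^ 2 + 2 * s ^ (n + 1) * g s * g' s) volume 0 b :=
    (by fun_prop : ContinuousOn _ (Icc 0 b)).intervalIntegrable_of_Icc hb
  have hF : ∀ x ∈ Ioo 0 b, HasDerivAt (fun s => s ^ (n + 1) * g s ^ 2)
      ((n + 1) * x ^ n * g x ^ 2 + 2 * x ^ (n + 1) * g x * g' x) x := by
    intro x hx
    refine ((hasDerivAt_pow (n + 1) x).mul ((hderiv x hx).pow 2)).congr_deriv ?_
    push_cast [Pi.pow_apply]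
    ring
  rw [integral_eq_sub_of_hasDerivAt_of_le hb (by fun_prop) hF hF'int]
  simp [hgb]

/-- A weighted Hardy inequality; the constant `(2 / (n + 1)) ^ 2` is sharp. -/
theorem integral_pow_mul_sq_le (n : ℕ) (hb : 0 ≤ b)
    (hg : ContinuousOn g (Icc 0 b)) (hg' : ContinuousOn g' (Icc 0 b))
    (hderiv : ∀ x ∈ Ioo 0 b, HasDerivAt g (g' x) x) (hgb : g b = 0) :
    ∫ s in 0..b, s ^ n * g s ^ 2 ≤
      (2 / (n + 1)) ^ 2 * ∫ s in 0..b, s ^ (n + 2) * g' s ^ 2 := by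
  have hint : ∀ {f : ℝ → ℝ}, ContinuousOn f (Icc 0 b) → IntervalIntegrable f volume 0 b :=
    fun hf => hf.intervalIntegrable_of_Icc hb
  have hF' := integral_deriv_pow_succ_mul_sq_eq_zero n hb hg hg' hderiv hgb
  calc ∫ s in 0..b, s ^ n * g s ^ 2
      ≤ ∫ s in 0..b, (2 / (n + 1) * ((n + 1) * s ^ n * g s ^ 2 + 2 * s ^ (n + 1) * g s * g' s) +
          (2 / (n + 1)) ^ 2 * (s ^ (n + 2) * g' s ^ 2)) :=
        integral_mono_on hb (hint (by fun_prop)) (hint (by fun_prop))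
          fun s hs => pow_mul_sq_le_of_nonneg n hs.1 _ _
    _ = (2 / (n + 1)) ^ 2 * ∫ s in 0..b, s ^ (n + 2) * g' s ^ 2 := by
        rw [integral_add ((hint (by fun_prop)).const_mul _) ((hint (by fun_prop)).const_mul _),
          intervalIntegral.integral_const_mul, intervalIntegral.integral_const_mul, hF', mul_zero,
          zero_add]

end Hardy

/-- Weighted Poincaré inequality: there is a universal constant `C` such that every `C¹`
function `g` on `[0,1]` with `g 1 = 0` satisfies `∫₀¹ s² g² ds ≤ C ∫₀¹ s² g'² ds`. -/
theorem poincare_weighted_inequality :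
    ∃ C > 0, ∀ g : ℝ → ℝ, ContDiffOn ℝ 1 g (Set.Icc 0 1) → g 1 = 0 →
      ∫ s in (0:ℝ)..1, s ^ 2 * (g s) ^ 2 ≤ C * ∫ s in (0:ℝ)..1, s ^ 2 * (deriv g s) ^ 2 := by
  refine ⟨4 / 9, by norm_num, fun g hg hg1 => ?_⟩
  set g' := derivWithin g (Icc 0 1)
  have hg' : ContinuousOn g' (Icc 0 1) :=
    hg.continuousOn_derivWithin (uniqueDiffOn_Icc one_pos) le_rfl
  have hg'_eq : EqOn g' (deriv g) (Ioo 0 1) := fun x hx =>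
    derivWithin_of_mem_nhds (Icc_mem_nhds hx.1 hx.2)
  have hderiv : ∀ x ∈ Ioo (0 : ℝ) 1, HasDerivAt g (g' x) x := fun x hx => by
    rw [hg'_eq hx]
    exact (hg.contDiffAt (Icc_mem_nhds hx.1 hx.2)).differentiableAt one_ne_zero |>.hasDerivAt
  have hardy := integral_pow_mul_sq_le 2 zero_le_one hg.continuousOn hg' hderiv hg1
  calc ∫ s in (0:ℝ)..1, s ^ 2 * g s ^ 2
      ≤ 4 / 9 * ∫ s in (0:ℝ)..1, s ^ 4 * g' s ^ 2 := by norm_num at hardy; exact hardy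
    _ ≤ 4 / 9 * ∫ s in (0:ℝ)..1, s ^ 2 * g' s ^ 2 := by
        gcongr
        refine integral_mono_on zero_le_one ?_ ?_ fun s hs => ?_
        · exact (by fun_prop : ContinuousOn _ _).intervalIntegrable_of_Icc zero_le_one
        · exact (by fun_prop : ContinuousOn _ _).intervalIntegrable_of_Icc zero_le_one
        · exact mul_le_mul_of_nonneg_right (pow_le_pow_of_le_one hs.1 hs.2 (by norm_num))
            (sq_nonneg _)
    _ = 4 / 9 * ∫ s in (0:ℝ)..1, s ^ 2 * deriv g s ^ 2 := by
        congr 1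
        exact integral_congr_Ioo_of_le zero_le_one fun s hs => by simp only [hg'_eq hs]
end

section
/- Let u be a C^∞ solution of u'' + (2/r)u' + c u^α = 0 on an interval (R-δ, R] with u > 0 on (R-δ, R), u(R) = 0, u'(R) < 0 finite, where 0 < α < 5 and c > 0. Then for each integer k ≥ 1 there is a constant C_k with |∂_r^k u(r)| ≤ C_k (1 + u(r)^{α - k + 2}) for r near R. -/
open Real Set Filter Topology


set_option maxHeartbeats 3200000

/-- absorb a power: if `e ≤ f` or `0 ≤ f` then `w^f ≲ 1 + w^e` on `(0, D]`. -/
lemma LE_aux1 {D e f : ℝ} (hD : 0 < D) (h : e ≤ f ∨ 0 ≤ f) :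
    ∃ K : ℝ, 0 < K ∧ ∀ w : ℝ, 0 < w → w ≤ D → w ^ f ≤ K * (1 + w ^ e) := by
  rcases le_or_gt 0 f with hf | hf
  · refine ⟨D ^ f, Real.rpow_pos_of_pos hD f, fun w hw hwD => ?_⟩
    have h1 : w ^ f ≤ D ^ f := Real.rpow_le_rpow hw.le hwD hf
    have h2 : (0:ℝ) ≤ w ^ e := Real.rpow_nonneg hw.le e
    nlinarith [Real.rpow_pos_of_pos hD f]
  · have hef : e ≤ f := h.resolve_right (not_le.2 hf)
    refine ⟨D ^ (f - e), Real.rpow_pos_of_pos hD _, fun w hw hwD => ?_⟩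
    have h1 : w ^ f = w ^ (f - e) * w ^ e := by
      rw [← Real.rpow_add hw]; ring_nf
    have h2 : w ^ (f - e) ≤ D ^ (f - e) := Real.rpow_le_rpow hw.le hwD (by linarith)
    have h3 : (0:ℝ) ≤ w ^ e := Real.rpow_nonneg hw.le e
    calc w ^ f = w ^ (f - e) * w ^ e := h1
      _ ≤ D ^ (f - e) * (1 + w ^ e) := by
          apply mul_le_mul h2 (by linarith) h3 (Real.rpow_nonneg hD.le _)

/-- product absorb. -/
lemma LE_aux2 {D e e₁ e₂ : ℝ} (hD : 0 < D) (h₁ : e ≤ e₁ ∨ 0 ≤ e₁) (h₂ : e ≤ e₂ ∨ 0 ≤ e₂)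
    (h₁₂ : e ≤ e₁ + e₂ ∨ 0 ≤ e₁ + e₂) :
    ∃ K : ℝ, 0 < K ∧ ∀ w : ℝ, 0 < w → w ≤ D →
      (1 + w ^ e₁) * (1 + w ^ e₂) ≤ K * (1 + w ^ e) := by
  obtain ⟨K₁, hK₁, hb₁⟩ := LE_aux1 hD h₁
  obtain ⟨K₂, hK₂, hb₂⟩ := LE_aux1 hD h₂
  obtain ⟨K₃, hK₃, hb₃⟩ := LE_aux1 hD h₁₂
  refine ⟨1 + K₁ + K₂ + K₃, by linarith, fun w hw hwD => ?_⟩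
  have e1 : (1 + w ^ e₁) * (1 + w ^ e₂) = 1 + w ^ e₁ + w ^ e₂ + w ^ (e₁ + e₂) := by
    rw [Real.rpow_add hw]; ring
  have hX : (0:ℝ) ≤ w ^ e := Real.rpow_nonneg hw.le e
  have b1 := hb₁ w hw hwD
  have b2 := hb₂ w hw hwD
  have b3 := hb₃ w hw hwD
  have h1X : (1:ℝ) ≤ 1 + w ^ e := by linarith
  calc (1 + w ^ e₁) * (1 + w ^ e₂) = 1 + w ^ e₁ + w ^ e₂ + w ^ (e₁ + e₂) := e1
    _ ≤ (1 + w ^ e) + K₁ * (1 + w ^ e) + K₂ * (1 + w ^ e) + K₃ * (1 + w ^ e) := by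
        gcongr <;> linarith
    _ = (1 + K₁ + K₂ + K₃) * (1 + w ^ e) := by ring

/-- comparison of rpow under two-sided linear comparison -/
lemma LE_aux3 {a b c₁ c₂ : ℝ} (ha : 0 < a) (hb : 0 < b) (hc₁ : 0 < c₁) (hc₂ : 0 < c₂)
    (h₁ : a ≤ c₁ * b) (h₂ : c₂ * b ≤ a) (e : ℝ) :
    a ^ e ≤ max (c₁ ^ e) (c₂ ^ e) * b ^ e := by
  rcases le_or_gt 0 e with he | he
  · calc a ^ e ≤ (c₁ * b) ^ e := Real.rpow_le_rpow ha.le h₁ he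
      _ = c₁ ^ e * b ^ e := Real.mul_rpow hc₁.le hb.le
      _ ≤ _ := mul_le_mul_of_nonneg_right (le_max_left _ _) (Real.rpow_nonneg hb.le e)
  · calc a ^ e ≤ (c₂ * b) ^ e := Real.rpow_le_rpow_of_nonpos (by positivity) h₂ he.le
      _ = c₂ ^ e * b ^ e := Real.mul_rpow hc₂.le hb.le
      _ ≤ _ := mul_le_mul_of_nonneg_right (le_max_right _ _) (Real.rpow_nonneg hb.le e)

/-- uniformize finitely many constants -/
lemma LE_aux4 {m : ℕ} {s : Set ℝ} {f : ℕ → ℝ → ℝ} {g : ℝ → ℝ}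
    (hg : ∀ r ∈ s, 0 ≤ g r)
    (h : ∀ j, j ≤ m → ∃ C, 0 < C ∧ ∀ r ∈ s, f j r ≤ C * g r) :
    ∃ C, 0 < C ∧ ∀ j, j ≤ m → ∀ r ∈ s, f j r ≤ C * g r := by
  induction m with
  | zero =>
    obtain ⟨C, hC, hb⟩ := h 0 le_rfl
    exact ⟨C, hC, fun j hj r hr => by rw [Nat.le_zero.1 hj]; exact hb r hr⟩
  | succ m ih =>
    obtain ⟨C₁, hC₁, hb₁⟩ := ih fun j hj => h j (hj.trans (Nat.le_succ m))
    obtain ⟨C₂, hC₂, hb₂⟩ := h (m+1) le_rfl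
    refine ⟨max C₁ C₂, lt_max_of_lt_left hC₁, fun j hj r hr => ?_⟩
    rcases Nat.lt_succ_iff_lt_or_eq.1 (Nat.lt_succ_of_le hj) with h' | h'
    · exact (hb₁ j (Nat.lt_succ_iff.1 h') r hr).trans
        (mul_le_mul_of_nonneg_right (le_max_left _ _) (hg r hr))
    · rw [h']
      exact (hb₂ r hr).trans (mul_le_mul_of_nonneg_right (le_max_right _ _) (hg r hr))

lemma LE_absEq {s : Set ℝ} (hs : IsOpen s) {f : ℝ → ℝ} {r : ℝ} (hr : r ∈ s) (n : ℕ) :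
    |iteratedDeriv n f r| = ‖iteratedFDerivWithin ℝ n f s r‖ := by
  rw [iteratedFDerivWithin_of_isOpen n hs hr, norm_iteratedFDeriv_eq_norm_iteratedDeriv,
    Real.norm_eq_abs]

lemma LE_congr {s : Set ℝ} (hs : IsOpen s) {f g : ℝ → ℝ} (h : Set.EqOn f g s) {r : ℝ}
    (hr : r ∈ s) (n : ℕ) : iteratedDeriv n f r = iteratedDeriv n g r := by
  have h1 : iteratedFDerivWithin ℝ n f s r = iteratedFDerivWithin ℝ n g s r :=
    iteratedFDerivWithin_congr h hr n
  rw [iteratedDeriv_eq_iteratedFDeriv, iteratedDeriv_eq_iteratedFDeriv,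
    ← iteratedFDerivWithin_of_isOpen n hs hr, ← iteratedFDerivWithin_of_isOpen n hs hr, h1]

lemma LE_addLe {s : Set ℝ} (hs : IsOpen s) {f g : ℝ → ℝ}
    (hf : ContDiffOn ℝ (⊤ : ℕ∞) f s) (hg : ContDiffOn ℝ (⊤ : ℕ∞) g s) {r : ℝ} (hr : r ∈ s) (n : ℕ) :
    |iteratedDeriv n (fun x => f x + g x) r| ≤ |iteratedDeriv n f r| + |iteratedDeriv n g r| := by
  rw [LE_absEq hs hr, LE_absEq hs hr, LE_absEq hs hr,
    iteratedFDerivWithin_add_apply' ((hf r hr).of_le (by exact_mod_cast le_top)) ((hg r hr).of_le (by exact_mod_cast le_top)) hs.uniqueDiffOn hr]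
  exact norm_add_le _ _

lemma LE_constMul {s : Set ℝ} (hs : IsOpen s) {f : ℝ → ℝ} (hf : ContDiffOn ℝ (⊤ : ℕ∞) f s) {r : ℝ}
    (hr : r ∈ s) (a : ℝ) (n : ℕ) :
    |iteratedDeriv n (fun x => a * f x) r| = |a| * |iteratedDeriv n f r| := by
  rw [LE_absEq hs hr, LE_absEq hs hr]
  have h1 : (fun x => a * f x) = a • f := by funext x; simp [smul_eq_mul]
  rw [h1, iteratedFDerivWithin_const_smul_apply ((hf r hr).of_le (by exact_mod_cast le_top)) hs.uniqueDiffOn hr,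
    ← Real.norm_eq_abs a]
  exact norm_smul a (iteratedFDerivWithin ℝ n f s r)


lemma LE_aux5 {s : Set ℝ} (hs : IsOpen s) {f g : ℝ → ℝ} {D : ℝ} (hD : 0 < D)
    {w : ℝ → ℝ} (hw : ∀ r ∈ s, 0 < w r ∧ w r ≤ D)
    {n : ℕ} {a b e : ℝ}
    (hf : ContDiffOn ℝ (⊤ : ℕ∞) f s) (hg : ContDiffOn ℝ (⊤ : ℕ∞) g s)
    (hfb : ∀ i : ℕ, i ≤ n → ∃ C, 0 < C ∧ ∀ r ∈ s,
      |iteratedDeriv i f r| ≤ C * (1 + w r ^ (a - i)))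
    (hgb : ∀ i : ℕ, i ≤ n → ∃ C, 0 < C ∧ ∀ r ∈ s,
      |iteratedDeriv i g r| ≤ C * (1 + w r ^ (b - i)))
    (hea : ∀ i : ℕ, i ≤ n → (e ≤ a - i ∨ 0 ≤ a - (i:ℝ)))
    (heb : ∀ i : ℕ, i ≤ n → (e ≤ b - i ∨ 0 ≤ b - (i:ℝ)))
    (heab : e ≤ a + b - n ∨ 0 ≤ a + b - (n:ℝ)) :
    ∃ C, 0 < C ∧ ∀ r ∈ s,
      |iteratedDeriv n (fun x => f x * g x) r| ≤ C * (1 + w r ^ e) := by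
  have key : ∀ i : ℕ, ∃ K, 0 < K ∧ (i ≤ n → ∀ r ∈ s,
      |iteratedDeriv i f r| * |iteratedDeriv (n - i) g r| ≤ K * (1 + w r ^ e)) := by
    intro i
    by_cases hi : i ≤ n
    · obtain ⟨Cf, hCf, hbf⟩ := hfb i hi
      obtain ⟨Cg, hCg, hbg⟩ := hgb (n - i) (Nat.sub_le n i)
      have hcast : ((n - i : ℕ) : ℝ) = (n : ℝ) - (i : ℝ) := by
        exact Nat.cast_sub hi
      have heab' : e ≤ (a - i) + (b - ((n - i : ℕ) : ℝ)) ∨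
          0 ≤ (a - i) + (b - ((n - i : ℕ) : ℝ)) := by
        rw [hcast]
        rcases heab with h | h
        · left; linarith
        · right; linarith
      obtain ⟨K₀, hK₀, hbK⟩ := LE_aux2 hD (hea i hi) (heb (n - i) (Nat.sub_le n i)) heab'
      refine ⟨Cf * Cg * K₀, by positivity, fun _ r hr => ?_⟩
      have h1 := hbf r hr
      have h2 := hbg r hr
      have h3 := hbK (w r) (hw r hr).1 (hw r hr).2
      have hp1 : (0:ℝ) < 1 + w r ^ (a - i) := by
        have := Real.rpow_nonneg (hw r hr).1.le (a - i); linarith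
      have hp2 : (0:ℝ) < 1 + w r ^ (b - ((n - i : ℕ) : ℝ)) := by
        have := Real.rpow_nonneg (hw r hr).1.le (b - ((n - i : ℕ) : ℝ)); linarith
      calc |iteratedDeriv i f r| * |iteratedDeriv (n - i) g r|
          ≤ (Cf * (1 + w r ^ (a - i))) * (Cg * (1 + w r ^ (b - ((n - i : ℕ) : ℝ)))) := by
            apply mul_le_mul h1 h2 (abs_nonneg _) (by positivity)
        _ = Cf * Cg * ((1 + w r ^ (a - i)) * (1 + w r ^ (b - ((n - i : ℕ) : ℝ)))) := by ring
        _ ≤ Cf * Cg * (K₀ * (1 + w r ^ e)) := by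
            apply mul_le_mul_of_nonneg_left h3 (by positivity)
        _ = Cf * Cg * K₀ * (1 + w r ^ e) := by ring
    · exact ⟨1, one_pos, fun h => absurd h hi⟩
  choose K hK0 hK using key
  refine ⟨∑ i ∈ Finset.range (n + 1), (n.choose i : ℝ) * K i, ?_, fun r hr => ?_⟩
  · apply Finset.sum_pos
    · intro i hi
      have hi' : i ≤ n := Nat.lt_succ_iff.1 (Finset.mem_range.1 hi)
      have : (0:ℝ) < n.choose i := by exact_mod_cast Nat.choose_pos hi'
      exact mul_pos this (hK0 i)
    · exact ⟨0, Finset.mem_range.2 (Nat.succ_pos n)⟩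
  · rw [LE_absEq hs hr]
    refine (norm_iteratedFDerivWithin_mul_le hf hg hs.uniqueDiffOn hr (by exact_mod_cast le_top)).trans ?_
    rw [Finset.sum_mul]
    apply Finset.sum_le_sum
    intro i hi
    have hi' : i ≤ n := Nat.lt_succ_iff.1 (Finset.mem_range.1 hi)
    have h2 := hK i hi' r hr
    rw [← LE_absEq hs hr i, ← LE_absEq hs hr (n - i)]
    have hch : (0:ℝ) ≤ (n.choose i : ℝ) := Nat.cast_nonneg _
    calc (n.choose i : ℝ) * |iteratedDeriv i f r| * |iteratedDeriv (n - i) g r|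
        = (n.choose i : ℝ) * (|iteratedDeriv i f r| * |iteratedDeriv (n - i) g r|) := by ring
      _ ≤ (n.choose i : ℝ) * (K i * (1 + w r ^ e)) := mul_le_mul_of_nonneg_left h2 hch
      _ = (n.choose i : ℝ) * K i * (1 + w r ^ e) := by ring

/-- Boundary asymptotics near the first zero of a Lane–Emden solution:
if `u` is a smooth solution of `u'' + (2/r)u' + c u^α = 0` on `(R-δ, R]` with `u > 0` on
`(R-δ, R)`, `u(R) = 0` and `u'(R) < 0` finite, where `0 < α < 5` and `c > 0`, then for each
`k ≥ 1` there is a constant `C_k` with `|∂_r^k u| ≤ C_k (1 + u^{α-k+2})` near `R`. -/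
theorem laneEmden_boundary_derivative_bounds
    (α c R δ : ℝ) (hα0 : 0 < α) (hα5 : α < 5) (hc : 0 < c)
    (hδ : 0 < δ) (hRδ : 0 < R - δ)
    (u : ℝ → ℝ) (hu : ContDiffOn ℝ (⊤ : ℕ∞) u (Set.Ioc (R - δ) R))
    (hode : ∀ r ∈ Set.Ioo (R - δ) R,
      iteratedDeriv 2 u r + (2 / r) * deriv u r + c * u r ^ α = 0)
    (hpos : ∀ r ∈ Set.Ioo (R - δ) R, 0 < u r) (huR : u R = 0)
    (hu' : derivWithin u (Set.Iic R) R < 0) :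
    ∀ k : ℕ, 1 ≤ k → ∃ C > 0, ∃ δ' > 0, δ' ≤ δ ∧
      ∀ r ∈ Set.Ioo (R - δ') R,
        |iteratedDeriv k u r| ≤ C * (1 + u r ^ (α - k + 2)) := by
  set L := derivWithin u (Set.Iic R) R with hLdef
  have hL : L < 0 := hu'
  have hRδR : R - δ < R := by linarith
  set J := Set.Ioc (R - δ) R with hJdef
  have hgR : derivWithin u J R = L := by
    rw [hLdef]
    apply derivWithin_congr_set
    have hmem : Set.Ioi (R - δ) ∈ 𝓝 R := Ioi_mem_nhds hRδR
    filter_upwards [hmem] with x hx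
    simp only [hJdef, Set.mem_Ioc, Set.mem_Iic, eq_iff_iff]
    exact ⟨fun h => h.2, fun h => ⟨hx, h⟩⟩
  have hudw : ContinuousOn (derivWithin u J) J :=
    hu.continuousOn_derivWithin (uniqueDiffOn_Ioc _ _) (by simp)
  have hRJ : R ∈ J := ⟨hRδR, le_rfl⟩
  have hcw : ContinuousWithinAt (derivWithin u J) J R := hudw R hRJ
  have hball : Metric.ball L (-L/2) ∈ 𝓝 L := Metric.ball_mem_nhds _ (by linarith)
  have hev : (derivWithin u J) ⁻¹' Metric.ball L (-L/2) ∈ 𝓝[J] R := by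
    have h1 : Filter.Tendsto (derivWithin u J) (𝓝[J] R) (𝓝 L) := by
      have := hcw
      rwa [ContinuousWithinAt, hgR] at this
    exact h1 hball
  obtain ⟨ε, hε, hεsub⟩ := Metric.mem_nhdsWithin_iff.1 hev
  set δ₀ := min δ ε with hδ₀def
  have hδ₀pos : 0 < δ₀ := lt_min hδ hε
  have hδ₀le : δ₀ ≤ δ := min_le_left _ _
  have hδ₀ε : δ₀ ≤ ε := min_le_right _ _
  set s := Set.Ioo (R - δ₀) R with hsdef
  have hsub : s ⊆ Set.Ioo (R - δ) R := by
    intro x hx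
    simp only [hsdef, Set.mem_Ioo] at hx ⊢
    exact ⟨by linarith [hx.1], hx.2⟩
  have hsubJ : s ⊆ J := fun x hx => ⟨(hsub hx).1, (hsub hx).2.le⟩
  have hsopen : IsOpen s := isOpen_Ioo
  have hJnhds : ∀ r ∈ s, J ∈ 𝓝 r := by
    intro r hr
    exact mem_nhds_iff.2 ⟨Set.Ioo (R - δ) R, Set.Ioo_subset_Ioc_self, isOpen_Ioo, hsub hr⟩
  have hderiv_eq : ∀ r ∈ s, deriv u r = derivWithin u J r := fun r hr =>
    (derivWithin_of_mem_nhds (hJnhds r hr)).symm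
  have hd1 : ∀ r ∈ s, 3*L/2 < deriv u r ∧ deriv u r < L/2 := by
    intro r hr
    have hrb : r ∈ Metric.ball R ε ∩ J := by
      constructor
      · rw [Metric.mem_ball, Real.dist_eq, abs_of_neg (by linarith [hr.2] : r - R < 0)]
        have := hr.1
        linarith [hr.1, hδ₀ε]
      · exact hsubJ hr
    have := hεsub hrb
    simp only [Set.mem_preimage, Metric.mem_ball, Real.dist_eq] at this
    rw [← hderiv_eq r hr] at this
    rw [abs_lt] at this
    constructor <;> linarith [this.1, this.2]
  have hcmp : ∀ r ∈ s, (-L/2) * (R - r) ≤ u r ∧ u r ≤ (-(3*L)/2) * (R - r) := by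
    intro r hr
    have hr' : r ∈ Set.Ioo (R - δ₀) R := hr
    have hrR : r < R := hr'.2
    have hcont : ContinuousOn u (Set.Icc r R) := by
      apply hu.continuousOn.mono
      intro x hx
      exact ⟨by linarith [hr'.1, hδ₀le, hx.1], hx.2⟩
    have hdiff : ∀ x ∈ Set.Ioo r R, HasDerivAt u (deriv u x) x := by
      intro x hx
      have hxs : x ∈ s := ⟨lt_trans hr'.1 hx.1, hx.2⟩
      exact (((hu x (hsubJ hxs)).contDiffAt (hJnhds x hxs)).differentiableAt (by simp)).hasDerivAt
    obtain ⟨ξ, hξ, hslope⟩ := exists_hasDerivAt_eq_slope u (deriv u) hrR hcont hdiff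
    have hξs : ξ ∈ s := ⟨lt_trans hr'.1 hξ.1, hξ.2⟩
    have hd := hd1 ξ hξs
    have hRr : (0:ℝ) < R - r := by linarith
    rw [huR] at hslope
    have hur : u r = -(deriv u ξ) * (R - r) := by
      have h2 : deriv u ξ * (R - r) = 0 - u r := by
        rw [hslope]; field_simp
      linarith [h2]
    constructor <;> nlinarith [hd.1, hd.2]
  have hm₁ : (0:ℝ) < -L/2 := by linarith
  have hm₂ : (0:ℝ) < -(3*L)/2 := by linarith
  have hw : ∀ r ∈ s, 0 < R - r ∧ R - r ≤ δ₀ := by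
    intro r hr
    have hr' : r ∈ Set.Ioo (R - δ₀) R := hr
    exact ⟨by linarith [hr'.2], by linarith [hr'.1]⟩
  have hpos_s : ∀ r ∈ s, 0 < u r := fun r hr => hpos r (hsub hr)
  -- rpow conversions
  have hwu : ∀ e : ℝ, ∃ K, 0 < K ∧ ∀ r ∈ s, (R - r) ^ e ≤ K * u r ^ e := by
    intro e
    refine ⟨max (((-L/2)⁻¹) ^ e) (((-(3*L)/2)⁻¹) ^ e),
      lt_max_of_lt_left (Real.rpow_pos_of_pos (by positivity) e), fun r hr => ?_⟩
    apply LE_aux3 (hw r hr).1 (hpos_s r hr) (by positivity) (by positivity) ?_ ?_ e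
    · rw [inv_mul_eq_div, le_div_iff₀ hm₁]
      nlinarith [(hcmp r hr).1]
    · rw [inv_mul_le_iff₀ hm₂]
      nlinarith [(hcmp r hr).2]
  have huw : ∀ e : ℝ, ∃ K, 0 < K ∧ ∀ r ∈ s, u r ^ e ≤ K * (R - r) ^ e := by
    intro e
    refine ⟨max ((-(3*L)/2) ^ e) ((-L/2) ^ e),
      lt_max_of_lt_left (Real.rpow_pos_of_pos hm₂ e), fun r hr => ?_⟩
    apply LE_aux3 (hpos_s r hr) (hw r hr).1 hm₂ hm₁ ?_ ?_ e
    · exact (hcmp r hr).2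
    · exact (hcmp r hr).1
  -- smoothness facts
  have hus : ContDiffOn ℝ (⊤ : ℕ∞) u s := hu.mono hsubJ
  have hdus : ContDiffOn ℝ (⊤ : ℕ∞) (deriv u) s := hus.deriv_of_isOpen hsopen (by simp)
  have hspos : ∀ x ∈ s, (0:ℝ) < x := by
    intro x hx
    have hx' : x ∈ Set.Ioo (R - δ₀) R := hx
    have : R - δ ≤ R - δ₀ := by linarith
    linarith [hx'.1]
  have hqs : ContDiffOn ℝ (⊤ : ℕ∞) (fun x : ℝ => -(2 / x)) s :=
    (contDiffOn_const.div contDiffOn_id (fun x hx => ne_of_gt (hspos x hx))).neg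
  have hrpows : ∀ β : ℝ, ContDiffOn ℝ (⊤ : ℕ∞) (fun x => u x ^ β) s := fun β x hx =>
    (hus x hx).rpow_const_of_ne (ne_of_gt (hpos_s x hx))
  -- bound on derivatives of -(2/x)
  have hq_bounded : ∀ i : ℕ, ∃ G, ∀ r ∈ s, |iteratedDeriv i (fun x : ℝ => -(2/x)) r| ≤ G := by
    intro i
    have hqt : ContDiffOn ℝ (⊤ : ℕ∞) (fun x : ℝ => -(2 / x)) (Set.Ioi (0:ℝ)) :=
      (contDiffOn_const.div contDiffOn_id (fun x hx => ne_of_gt hx)).neg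
    have h1 : ContinuousOn (iteratedFDerivWithin ℝ i (fun x : ℝ => -(2/x)) (Set.Ioi 0))
        (Set.Ioi 0) := hqt.continuousOn_iteratedFDerivWithin (by exact_mod_cast le_top) isOpen_Ioi.uniqueDiffOn
    have h2 : ContinuousOn (iteratedFDeriv ℝ i (fun x : ℝ => -(2/x))) (Set.Ioi 0) :=
      h1.congr fun x hx => (iteratedFDerivWithin_of_isOpen i isOpen_Ioi hx).symm
    have hIccsub : Set.Icc (R - δ₀) R ⊆ Set.Ioi (0:ℝ) := by
      intro x hx
      have : R - δ ≤ R - δ₀ := by linarith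
      simp only [Set.mem_Ioi]
      linarith [hx.1]
    obtain ⟨G, hG⟩ := isCompact_Icc.exists_bound_of_continuousOn (h2.mono hIccsub)
    refine ⟨G, fun r hr => ?_⟩
    have hr' : r ∈ Set.Icc (R - δ₀) R := ⟨hr.1.le, hr.2.le⟩
    have := hG r hr'
    rwa [norm_iteratedFDeriv_eq_norm_iteratedDeriv, Real.norm_eq_abs] at this
  -- the main induction
  have main : ∀ k : ℕ,
      (∃ C, 0 < C ∧ ∀ r ∈ s, |iteratedDeriv k u r| ≤ C * (1 + (R - r) ^ (α - k + 2))) ∧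
      (∀ β : ℝ, β ≤ α → ∃ C, 0 < C ∧ ∀ r ∈ s,
        |iteratedDeriv k (fun x => u x ^ β) r| ≤ C * (1 + (R - r) ^ (β - k))) := by
    intro k
    induction k using Nat.strong_induction_on with
    | _ k IH =>
    have hupart : ∃ C, 0 < C ∧ ∀ r ∈ s,
        |iteratedDeriv k u r| ≤ C * (1 + (R - r) ^ (α - k + 2)) := by
      match k, IH with
      | 0, _ =>
        refine ⟨-(3*L)/2 * δ₀, by positivity, fun r hr => ?_⟩
        have h0 : |iteratedDeriv 0 u r| = u r := by
          rw [iteratedDeriv_zero]; exact abs_of_pos (hpos_s r hr)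
        rw [h0]
        have h1 : u r ≤ -(3*L)/2 * δ₀ := by
          have := (hcmp r hr).2
          nlinarith [(hw r hr).2, (hw r hr).1]
        have h2 : (0:ℝ) ≤ (R - r) ^ (α - (0:ℕ) + 2) := Real.rpow_nonneg (hw r hr).1.le _
        have h3 : (0:ℝ) < -(3*L)/2 * δ₀ := by positivity
        nlinarith [mul_nonneg h3.le h2]
      | 1, _ =>
        refine ⟨-(3*L)/2, by positivity, fun r hr => ?_⟩
        have hd := hd1 r hr
        have h0 : |iteratedDeriv 1 u r| = -(deriv u r) := by
          rw [iteratedDeriv_one]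
          exact abs_of_neg (by linarith [hd.2])
        have h2 : (0:ℝ) ≤ (R - r) ^ (α - (1:ℕ) + 2) := Real.rpow_nonneg (hw r hr).1.le _
        rw [h0]
        nlinarith [hd.1, mul_nonneg hm₂.le h2]
      | (n+2), IH =>
        obtain ⟨C₂, hC₂, hb₂⟩ := (IH n (by omega)).2 α le_rfl
        have hfb : ∀ i : ℕ, i ≤ n → ∃ C, 0 < C ∧ ∀ r ∈ s,
            |iteratedDeriv i (fun x : ℝ => -(2/x)) r| ≤ C * (1 + (R - r) ^ ((n:ℝ) - i)) := by
          intro i hi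
          obtain ⟨G, hG⟩ := hq_bounded i
          refine ⟨max G 1, lt_max_of_lt_right one_pos, fun r hr => ?_⟩
          have h1 : (0:ℝ) ≤ (R - r) ^ ((n:ℝ) - i) := Real.rpow_nonneg (hw r hr).1.le _
          have h2 := hG r hr
          nlinarith [le_max_left G 1, le_max_right G 1, abs_nonneg (iteratedDeriv i (fun x : ℝ => -(2/x)) r)]
        have hgb : ∀ i : ℕ, i ≤ n → ∃ C, 0 < C ∧ ∀ r ∈ s,
            |iteratedDeriv i (deriv u) r| ≤ C * (1 + (R - r) ^ ((α+1) - i)) := by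
          intro i hi
          obtain ⟨C', hC', hb'⟩ := (IH (i+1) (by omega)).1
          refine ⟨C', hC', fun r hr => ?_⟩
          have h1 : iteratedDeriv i (deriv u) r = iteratedDeriv (i+1) u r := by
            rw [iteratedDeriv_succ']
          have h2 : α - ((i+1:ℕ):ℝ) + 2 = (α+1) - i := by push_cast; ring
          rw [h1, ← h2]
          exact hb' r hr
        have hprod := LE_aux5 (a := (n:ℝ)) (b := α + 1) (e := α - n) hsopen hδ₀pos hw
          hqs hdus hfb hgb ?_ ?_ ?_
        rotate_left
        · intro i hi
          right
          have : (i:ℝ) ≤ (n:ℝ) := by exact_mod_cast hi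
          linarith
        · intro i hi
          left
          have : (i:ℝ) ≤ (n:ℝ) := by exact_mod_cast hi
          linarith
        · right; linarith
        obtain ⟨C₁, hC₁, hb₁⟩ := hprod
        refine ⟨C₁ + c * C₂, by positivity, fun r hr => ?_⟩
        have hF : Set.EqOn (deriv (deriv u))
            (fun x => (-(2/x)) * deriv u x + (-c) * u x ^ α) s := by
          intro x hx
          have h0 := hode x (hsub hx)
          have h2 : iteratedDeriv 2 u x = deriv (deriv u) x := by
            rw [iteratedDeriv_succ, iteratedDeriv_one]
          rw [h2] at h0
          simp only []
          linarith
        have hrw : iteratedDeriv (n+2) u r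
            = iteratedDeriv n (fun x => (-(2/x)) * deriv u x + (-c) * u x ^ α) r := by
          have e1 : iteratedDeriv (n+2) u = iteratedDeriv n (deriv (deriv u)) := by
            rw [iteratedDeriv_succ', iteratedDeriv_succ']
          rw [e1]
          exact LE_congr hsopen hF hr n
        rw [hrw]
        have hsum := LE_addLe (f := fun x => (-(2/x)) * deriv u x)
          (g := fun x => (-c) * u x ^ α) hsopen (hqs.mul hdus)
          (contDiffOn_const.mul (hrpows α)) hr n
        have hc2 : |iteratedDeriv n (fun x => (-c) * u x ^ α) r|
            = c * |iteratedDeriv n (fun x => u x ^ α) r| := by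
          rw [LE_constMul hsopen (hrpows α) hr (-c) n, abs_neg, abs_of_pos hc]
        have hexp : α - ((n+2:ℕ):ℝ) + 2 = α - n := by push_cast; ring
        rw [hexp]
        calc |iteratedDeriv n (fun x => (-(2/x)) * deriv u x + (-c) * u x ^ α) r|
            ≤ |iteratedDeriv n (fun x => (-(2/x)) * deriv u x) r|
              + |iteratedDeriv n (fun x => (-c) * u x ^ α) r| := hsum
          _ ≤ C₁ * (1 + (R - r) ^ (α - n)) + c * (C₂ * (1 + (R - r) ^ (α - n))) := by
              apply add_le_add (hb₁ r hr)
              rw [hc2]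
              exact mul_le_mul_of_nonneg_left (hb₂ r hr) hc.le
          _ = (C₁ + c * C₂) * (1 + (R - r) ^ (α - n)) := by ring
    have hupart_all : ∀ j : ℕ, j ≤ k → ∃ C, 0 < C ∧ ∀ r ∈ s,
        |iteratedDeriv j u r| ≤ C * (1 + (R - r) ^ (α - j + 2)) := by
      intro j hj
      rcases eq_or_lt_of_le hj with h | h
      · subst h; exact hupart
      · exact (IH j h).1
    refine ⟨hupart, ?_⟩
    intro β hβ
    match k, IH, hupart_all with
    | 0, _, _ =>
      obtain ⟨K, hK, hKb⟩ := huw β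
      refine ⟨K, hK, fun r hr => ?_⟩
      have h0 : |iteratedDeriv 0 (fun x => u x ^ β) r| = u r ^ β := by
        rw [iteratedDeriv_zero]
        exact abs_of_pos (Real.rpow_pos_of_pos (hpos_s r hr) β)
      have hexp : β - ((0:ℕ):ℝ) = β := by push_cast; ring
      rw [h0, hexp]
      have h1 := hKb r hr
      have h2 : (0:ℝ) ≤ (R - r) ^ β := Real.rpow_nonneg (hw r hr).1.le _
      calc u r ^ β ≤ K * (R - r) ^ β := h1
        _ ≤ K * (1 + (R - r) ^ β) := by
            apply mul_le_mul_of_nonneg_left (by linarith) hK.le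
    | (n+1), IH, hupart_all =>
      have hgb : ∀ i : ℕ, i ≤ n → ∃ C, 0 < C ∧ ∀ r ∈ s,
          |iteratedDeriv i (deriv u) r| ≤ C * (1 + (R - r) ^ ((α+1) - i)) := by
        intro i hi
        obtain ⟨C', hC', hb'⟩ := hupart_all (i+1) (by omega)
        refine ⟨C', hC', fun r hr => ?_⟩
        have h1 : iteratedDeriv i (deriv u) r = iteratedDeriv (i+1) u r := by
          rw [iteratedDeriv_succ']
        have h2 : α - ((i+1:ℕ):ℝ) + 2 = (α+1) - i := by push_cast; ring
        rw [h1, ← h2]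
        exact hb' r hr
      have hfb : ∀ i : ℕ, i ≤ n → ∃ C, 0 < C ∧ ∀ r ∈ s,
          |iteratedDeriv i (fun x => u x ^ (β-1)) r| ≤ C * (1 + (R - r) ^ ((β-1) - i)) :=
        fun i hi => (IH i (by omega)).2 (β-1) (by linarith)
      have hprod := LE_aux5 (a := β - 1) (b := α + 1) (e := β - ((n:ℝ)+1)) hsopen hδ₀pos hw
        (hrpows (β-1)) hdus hfb hgb ?_ ?_ ?_
      rotate_left
      · intro i hi
        left
        have : (i:ℝ) ≤ (n:ℝ) := by exact_mod_cast hi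
        linarith
      · intro i hi
        left
        have : (i:ℝ) ≤ (n:ℝ) := by exact_mod_cast hi
        linarith
      · left; linarith
      obtain ⟨C₁, hC₁, hb₁⟩ := hprod
      refine ⟨|β| * C₁ + 1, by positivity, fun r hr => ?_⟩
      have hEq : Set.EqOn (deriv (fun x => u x ^ β))
          (fun x => β * (u x ^ (β-1) * deriv u x)) s := by
        intro x hx
        have hdx : HasDerivAt u (deriv u x) x :=
          (((hu x (hsubJ hx)).contDiffAt (hJnhds x hx)).differentiableAt (by simp)).hasDerivAt
        have h1 := hdx.rpow_const (p := β) (Or.inl (ne_of_gt (hpos_s x hx)))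
        simp only []
        rw [h1.deriv]
        ring
      have hrw : iteratedDeriv (n+1) (fun x => u x ^ β) r
          = iteratedDeriv n (fun x => β * (u x ^ (β-1) * deriv u x)) r := by
        rw [iteratedDeriv_succ']
        exact LE_congr hsopen hEq hr n
      have habs : |iteratedDeriv n (fun x => β * (u x ^ (β-1) * deriv u x)) r|
          = |β| * |iteratedDeriv n (fun x => u x ^ (β-1) * deriv u x) r| :=
        LE_constMul hsopen ((hrpows (β-1)).mul hdus) hr β n
      have hexp : β - ((n+1:ℕ):ℝ) = β - ((n:ℝ)+1) := by push_cast; ring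
      rw [hrw, habs, hexp]
      have h1 := hb₁ r hr
      have h2 : (0:ℝ) ≤ (R - r) ^ (β - ((n:ℝ)+1)) := Real.rpow_nonneg (hw r hr).1.le _
      have h3 : (0:ℝ) ≤ |β| := abs_nonneg β
      have h4 : (0:ℝ) ≤ |iteratedDeriv n (fun x => u x ^ (β-1) * deriv u x) r| := abs_nonneg _
      calc |β| * |iteratedDeriv n (fun x => u x ^ (β-1) * deriv u x) r|
          ≤ |β| * (C₁ * (1 + (R - r) ^ (β - ((n:ℝ)+1)))) :=
            mul_le_mul_of_nonneg_left h1 h3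
        _ ≤ (|β| * C₁ + 1) * (1 + (R - r) ^ (β - ((n:ℝ)+1))) := by nlinarith
  -- conclusion
  intro k hk
  obtain ⟨C, hC, hCb⟩ := (main k).1
  obtain ⟨K, hK, hKb⟩ := hwu (α - k + 2)
  refine ⟨C * (1 + K), by positivity, δ₀, hδ₀pos, hδ₀le, fun r hr => ?_⟩
  have h1 := hCb r hr
  have h2 := hKb r hr
  have h3 : (0:ℝ) ≤ u r ^ (α - k + 2) := Real.rpow_nonneg (hpos_s r hr).le _
  calc |iteratedDeriv k u r| ≤ C * (1 + (R - r) ^ (α - k + 2)) := h1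
    _ ≤ C * (1 + K * u r ^ (α - k + 2)) := by
        apply mul_le_mul_of_nonneg_left (by linarith) hC.le
    _ ≤ C * (1 + K) * (1 + u r ^ (α - k + 2)) := by nlinarith
end

section
/- Let ρ = u^α where u is a positive C^∞ function on (R-δ, R) satisfying |∂_r^k u| ≤ O(1) + O(u^{α-k+2}) for all k ≥ 1 and |u'| bounded, with α = (1-εK)/(εK) ∈ (0,5). Then |∂_r ρ| = O(ρ^{(1-2εK)/(1-εK)}), and inductively |∂_r^k ρ| ≤ O(ρ^{(1-(1+k)εK)/(1-εK)}) near r = R. -/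
open scoped ContDiff

private lemma iteratedDerivWithin_of_isOpen' {f : ℝ → ℝ} {s : Set ℝ} (hs : IsOpen s)
    {x : ℝ} (hx : x ∈ s) (n : ℕ) :
    iteratedDerivWithin n f s x = iteratedDeriv n f x := by
  rw [iteratedDerivWithin_eq_iteratedFDerivWithin, iteratedDeriv_eq_iteratedFDeriv,
    iteratedFDerivWithin_of_isOpen n hs hx]

/-- Boundary asymptotics for the density `ρ = u^α`, `α = (1-εK)/(εK) ∈ (0,5)`:
if `u > 0` satisfies `|∂_r^k u| ≤ O(1) + O(u^{α-k+2})` for all `k ≥ 1` with `|u'|` bounded,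
then `|∂_r^k ρ| ≤ O(ρ^{(1-(1+k)εK)/(1-εK)})` near `r = R` (the case `k = 1` reading
`|∂_r ρ| = O(ρ^{(1-2εK)/(1-εK)})`). -/
theorem density_boundary_derivative_bounds
    (ε K R δ : ℝ) (hεK : 0 < ε * K) (hεK1 : ε * K < 1)
    (hδ : 0 < δ) (hRδ : 0 < R - δ)
    (α : ℝ) (hαdef : α = (1 - ε * K) / (ε * K)) (hα0 : 0 < α) (hα5 : α < 5)
    (u : ℝ → ℝ) (hu : ContDiffOn ℝ (⊤ : ℕ∞) u (Set.Ioo (R - δ) R))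
    (hpos : ∀ r ∈ Set.Ioo (R - δ) R, 0 < u r)
    (hbd : ∀ k : ℕ, 1 ≤ k → ∃ C > 0, ∀ r ∈ Set.Ioo (R - δ) R,
      |iteratedDeriv k u r| ≤ C * (1 + u r ^ (α - k + 2)))
    (hbd1 : ∃ C > 0, ∀ r ∈ Set.Ioo (R - δ) R, |deriv u r| ≤ C) :
    ∀ k : ℕ, 1 ≤ k → ∃ C > 0, ∃ δ' > 0, δ' ≤ δ ∧
      ∀ r ∈ Set.Ioo (R - δ') R,
        |iteratedDeriv k (fun t => u t ^ α) r|
          ≤ C * (u r ^ α) ^ ((1 - (1 + (k : ℝ)) * ε * K) / (1 - ε * K)) := by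
  set s : Set ℝ := Set.Ioo (R - δ) R with hsdef
  have hsO : IsOpen s := isOpen_Ioo
  have hsU : UniqueDiffOn ℝ s := hsO.uniqueDiffOn
  have hdiff : ∀ x ∈ s, DifferentiableAt ℝ u x := fun x hx =>
    (hu.contDiffAt (hsO.mem_nhds hx)).differentiableAt (by simp)
  -- u is bounded above on s
  obtain ⟨C₁, hC₁pos, hC₁⟩ := hbd1
  have hr0 : R - δ / 2 ∈ s := ⟨by linarith, by linarith⟩
  set M : ℝ := max 1 (u (R - δ / 2) + C₁ * δ) with hMdef
  have hM1 : (1 : ℝ) ≤ M := le_max_left _ _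
  have hM0 : (0 : ℝ) < M := lt_of_lt_of_le one_pos hM1
  have huM : ∀ r ∈ s, u r ≤ M := by
    intro r hr
    have hmvt := (convex_Ioo (R - δ) R).norm_image_sub_le_of_norm_deriv_le hdiff
      (fun x hx => by simpa [Real.norm_eq_abs] using hC₁ x hx) hr0 hr
    rw [Real.norm_eq_abs, Real.norm_eq_abs] at hmvt
    have h1 : u r - u (R - δ / 2) ≤ C₁ * |r - (R - δ / 2)| := (le_abs_self _).trans hmvt
    have h2 : |r - (R - δ / 2)| ≤ δ := by
      rw [abs_le]; obtain ⟨ha, hb⟩ := hr; constructor <;> linarith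
    have h3 : C₁ * |r - (R - δ / 2)| ≤ C₁ * δ := by
      exact mul_le_mul_of_nonneg_left h2 hC₁pos.le
    have : u r ≤ u (R - δ / 2) + C₁ * δ := by linarith
    exact this.trans (le_max_right _ _)
  -- derivative bounds in the convenient form
  have hDa : ∀ j : ℕ, ∃ D > 0, ∀ r ∈ s,
      |iteratedDeriv (j + 1) u r| ≤ D * u r ^ (-(j : ℝ)) := by
    intro j
    obtain ⟨C, hCpos, hC⟩ := hbd (j + 1) (Nat.le_add_left 1 j)
    refine ⟨C * (M ^ (j : ℝ) + M ^ (α + 1)), by positivity, ?_⟩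
    intro r hr
    have hur := hpos r hr
    have hurM := huM r hr
    have e1 : (1 : ℝ) ≤ M ^ (j : ℝ) * u r ^ (-(j : ℝ)) := by
      have h1 : u r ^ (j : ℝ) ≤ M ^ (j : ℝ) :=
        Real.rpow_le_rpow hur.le hurM (Nat.cast_nonneg j)
      have h0 : u r ^ (j : ℝ) * u r ^ (-(j : ℝ)) = 1 := by
        rw [← Real.rpow_add hur]; simp
      calc (1 : ℝ) = u r ^ (j : ℝ) * u r ^ (-(j : ℝ)) := h0.symm
        _ ≤ M ^ (j : ℝ) * u r ^ (-(j : ℝ)) :=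
          mul_le_mul_of_nonneg_right h1 (Real.rpow_nonneg hur.le _)
    have e2 : u r ^ (α - ((j + 1 : ℕ) : ℝ) + 2) ≤ M ^ (α + 1) * u r ^ (-(j : ℝ)) := by
      have heq : α - ((j + 1 : ℕ) : ℝ) + 2 = (α + 1) + (-(j : ℝ)) := by push_cast; ring
      rw [heq, Real.rpow_add hur]
      exact mul_le_mul_of_nonneg_right
        (Real.rpow_le_rpow hur.le hurM (by linarith)) (Real.rpow_nonneg hur.le _)
    calc |iteratedDeriv (j + 1) u r| ≤ C * (1 + u r ^ (α - ((j + 1 : ℕ) : ℝ) + 2)) := hC r hr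
      _ ≤ C * (M ^ (j : ℝ) * u r ^ (-(j : ℝ)) + M ^ (α + 1) * u r ^ (-(j : ℝ))) :=
        mul_le_mul_of_nonneg_left (add_le_add e1 e2) hCpos.le
      _ = C * (M ^ (j : ℝ) + M ^ (α + 1)) * u r ^ (-(j : ℝ)) := by ring
  choose Df hDfpos hDf using hDa
  -- main induction
  have main : ∀ k : ℕ, ∀ β : ℝ, ∃ C > 0, ∀ r ∈ s,
      |iteratedDerivWithin k (fun t => u t ^ β) s r| ≤ C * u r ^ (β - (k : ℝ)) := by
    intro k
    induction k using Nat.strong_induction_on with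
    | _ k ih =>
      intro β
      match k with
      | 0 =>
        refine ⟨1, one_pos, ?_⟩
        intro r hr
        rw [iteratedDerivWithin_zero, abs_of_pos (Real.rpow_pos_of_pos (hpos r hr) β)]
        simp
      | (n + 1) =>
        have hune : ∀ x ∈ s, u x ≠ 0 := fun x hx => (hpos x hx).ne'
        have hfβ1 : ContDiffOn ℝ ∞ (fun t => u t ^ (β - 1)) s :=
          ContDiffOn.rpow_const_of_ne hu hune
        have hdu : ContDiffOn ℝ ∞ (deriv u) s :=
          hu.deriv_of_isOpen hsO (by simp)
        have hfull : ContDiffOn ℝ ∞ (fun t => β * u t ^ (β - 1)) s :=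
          contDiffOn_const.mul hfβ1
        have hCex : ∀ i : ℕ, ∃ C > 0, ∀ r ∈ s,
            |iteratedDerivWithin (min i n) (fun t => u t ^ (β - 1)) s r|
              ≤ C * u r ^ (β - 1 - ((min i n : ℕ) : ℝ)) :=
          fun i => ih (min i n) (Nat.lt_succ_of_le (min_le_right i n)) (β - 1)
        choose Cf hCfpos hCf using hCex
        refine ⟨∑ i ∈ Finset.range (n + 1),
          (n.choose i : ℝ) * ((|β| + 1) * Cf i) * Df (n - i), ?_, ?_⟩
        · apply Finset.sum_pos
          · intro i hi
            have hcp : 0 < (n.choose i : ℝ) := by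
              exact_mod_cast Nat.choose_pos (Nat.lt_succ_iff.mp (Finset.mem_range.mp hi))
            have := hCfpos i
            have := hDfpos (n - i)
            positivity
          · exact ⟨0, Finset.mem_range.mpr (Nat.succ_pos n)⟩
        intro r hr
        have hru := hpos r hr
        -- rewrite the (n+1)-st derivative as the n-th derivative of the product
        have hEq : Set.EqOn (derivWithin (fun t => u t ^ β) s)
            (fun t => (β * u t ^ (β - 1)) * deriv u t) s := by
          intro x hx
          rw [derivWithin_of_isOpen hsO hx]
          have hd := ((hdiff x hx).hasDerivAt.rpow_const (p := β) (Or.inl (hune x hx))).deriv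
          rw [hd]; ring
        have hrw : iteratedDerivWithin (n + 1) (fun t => u t ^ β) s r
            = iteratedDerivWithin n (fun t => (β * u t ^ (β - 1)) * deriv u t) s r := by
          rw [iteratedDerivWithin_succ']
          exact iteratedDerivWithin_congr hEq hr
        rw [hrw]
        have hmul := norm_iteratedFDerivWithin_mul_le (𝕜 := ℝ)
          (f := fun t => β * u t ^ (β - 1)) (g := deriv u) (N := ∞)
          hfull hdu hsU hr (n := n) (by exact_mod_cast le_top)
        have habs : |iteratedDerivWithin n (fun t => (β * u t ^ (β - 1)) * deriv u t) s r|
            = ‖iteratedFDerivWithin ℝ n (fun y => (β * u y ^ (β - 1)) * deriv u y) s r‖ := by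
          rw [norm_iteratedFDerivWithin_eq_norm_iteratedDerivWithin, Real.norm_eq_abs]
        rw [habs]
        refine hmul.trans ?_
        have hterm : ∀ i ∈ Finset.range (n + 1),
            (n.choose i : ℝ) * ‖iteratedFDerivWithin ℝ i (fun t => β * u t ^ (β - 1)) s r‖
              * ‖iteratedFDerivWithin ℝ (n - i) (deriv u) s r‖
            ≤ ((n.choose i : ℝ) * ((|β| + 1) * Cf i) * Df (n - i))
                * u r ^ (β - ((n + 1 : ℕ) : ℝ)) := by
          intro i hi
          have hin : i ≤ n := Nat.lt_succ_iff.mp (Finset.mem_range.mp hi)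
          -- first factor
          have hf_i : ‖iteratedFDerivWithin ℝ i (fun t => β * u t ^ (β - 1)) s r‖
              ≤ (|β| + 1) * Cf i * u r ^ (β - 1 - (i : ℝ)) := by
            rw [norm_iteratedFDerivWithin_eq_norm_iteratedDerivWithin, Real.norm_eq_abs]
            have h1 : iteratedDerivWithin i (fun t => β * u t ^ (β - 1)) s r
                = β * iteratedDerivWithin i (fun t => u t ^ (β - 1)) s r :=
              iteratedDerivWithin_const_mul hr hsU β ((hfβ1.contDiffWithinAt hr).of_le (by exact_mod_cast le_top))
            rw [h1, abs_mul]
            have h2 := hCf i r hr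
            rw [min_eq_left hin] at h2
            calc |β| * |iteratedDerivWithin i (fun t => u t ^ (β - 1)) s r|
                ≤ (|β| + 1) * (Cf i * u r ^ (β - 1 - (i : ℝ))) := by
                  apply mul_le_mul (by linarith [abs_nonneg β]) h2 (abs_nonneg _)
                  linarith [abs_nonneg β]
              _ = (|β| + 1) * Cf i * u r ^ (β - 1 - (i : ℝ)) := by ring
          -- second factor
          have hg_i : ‖iteratedFDerivWithin ℝ (n - i) (deriv u) s r‖
              ≤ Df (n - i) * u r ^ (-(((n - i : ℕ)) : ℝ)) := by
            rw [norm_iteratedFDerivWithin_eq_norm_iteratedDerivWithin, Real.norm_eq_abs,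
              iteratedDerivWithin_of_isOpen' hsO hr, ← iteratedDeriv_succ']
            exact hDf (n - i) r hr
          have hexp : u r ^ (β - 1 - (i : ℝ)) * u r ^ (-(((n - i : ℕ)) : ℝ))
              = u r ^ (β - ((n + 1 : ℕ) : ℝ)) := by
            rw [← Real.rpow_add hru]
            congr 1
            have : ((n - i : ℕ) : ℝ) = (n : ℝ) - (i : ℝ) := by
              rw [Nat.cast_sub hin]
            rw [this]; push_cast; ring
          calc (n.choose i : ℝ)
              * ‖iteratedFDerivWithin ℝ i (fun t => β * u t ^ (β - 1)) s r‖
              * ‖iteratedFDerivWithin ℝ (n - i) (deriv u) s r‖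
              ≤ (n.choose i : ℝ) * ((|β| + 1) * Cf i * u r ^ (β - 1 - (i : ℝ)))
                * (Df (n - i) * u r ^ (-(((n - i : ℕ)) : ℝ))) := by
                apply mul_le_mul
                · exact mul_le_mul_of_nonneg_left hf_i (Nat.cast_nonneg _)
                · exact hg_i
                · exact norm_nonneg _
                · have hCfi : (0:ℝ) ≤ Cf i := (hCfpos i).le
                  positivity
            _ = ((n.choose i : ℝ) * ((|β| + 1) * Cf i) * Df (n - i))
                * (u r ^ (β - 1 - (i : ℝ)) * u r ^ (-(((n - i : ℕ)) : ℝ))) := by ring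
            _ = ((n.choose i : ℝ) * ((|β| + 1) * Cf i) * Df (n - i))
                * u r ^ (β - ((n + 1 : ℕ) : ℝ)) := by rw [hexp]
        calc ∑ i ∈ Finset.range (n + 1),
            (n.choose i : ℝ) * ‖iteratedFDerivWithin ℝ i (fun t => β * u t ^ (β - 1)) s r‖
              * ‖iteratedFDerivWithin ℝ (n - i) (deriv u) s r‖
            ≤ ∑ i ∈ Finset.range (n + 1),
              ((n.choose i : ℝ) * ((|β| + 1) * Cf i) * Df (n - i))
                * u r ^ (β - ((n + 1 : ℕ) : ℝ)) := Finset.sum_le_sum hterm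
          _ = (∑ i ∈ Finset.range (n + 1),
              (n.choose i : ℝ) * ((|β| + 1) * Cf i) * Df (n - i))
                * u r ^ (β - ((n + 1 : ℕ) : ℝ)) := by rw [Finset.sum_mul]
  -- conclusion
  intro k hk
  obtain ⟨C, hCpos, hC⟩ := main k α
  refine ⟨C, hCpos, δ, hδ, le_refl δ, ?_⟩
  intro r hr
  have hru := hpos r hr
  have h1 := hC r hr
  rw [iteratedDerivWithin_of_isOpen' hsO hr] at h1
  have hεK0 : ε * K ≠ 0 := ne_of_gt hεK
  have h1εK0 : 1 - ε * K ≠ 0 := by intro h; rw [sub_eq_zero] at h; linarith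
  have hexp : (u r ^ α) ^ ((1 - (1 + (k : ℝ)) * ε * K) / (1 - ε * K)) = u r ^ (α - (k : ℝ)) := by
    rw [← Real.rpow_mul hru.le]
    congr 1
    rw [hαdef]
    have hε0 : ε ≠ 0 := left_ne_zero_of_mul hεK0
    have hK0 : K ≠ 0 := right_ne_zero_of_mul hεK0
    field_simp
    ring
  rw [hexp]
  exact h1
end

section
/- Suppose ρ ∈ C¹(Ω) ∩ C(Ω̄), ρ > 0 in Ω, θ ∈ C²(Ω̄), ψ ∈ C²(ℝ³) satisfy K∇(ρθ) = -ρ∇ψ in Ω, -Δθ = ερ in Ω, Δψ = ρ in ℝ³ (ρ extended by 0), with ∫_Ω ρ = M > 0 and εK = 1, and assume ∫_Ω (θ/ρ)|∇ρ|² dx > 0 and the boundary trace satisfies ∫_{∂Ω} θ ∇ρ·n dS ≤ 0. Then a contradiction follows; i.e. no such regular solution exists with εK = 1. -/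
/-!
Since `Δψ` is continuous and equals `ρ` on `Ω` and `0` off `Ω`, the density `ρ` vanishes on `∂Ω`.
Put `V = K∇θ + ∇ψ`. The heat and Poisson equations with `εK = 1` make `V` divergence-free in `Ω`,
and the momentum equation reads `ρV = -Kθ∇ρ`. For the ramp `χ(t) = t·η(t - 1)`, `η` the smooth
transition function, the fields `W_k = χ(kρ)V` are `C¹` up to the boundary (they vanish where
`kρ ≤ 1`, in particular near `∂Ω`, which is what makes up for `ρ` being `C¹` only inside `Ω`), and
`div W_k = -kK χ'(kρ)(θ/ρ)|∇ρ|²`. The divergence theorem thus gives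
`∫_Ω χ'(kρ)(θ/ρ)|∇ρ|² = 0`; as `χ'` is bounded and equal to `1` on `(2, ∞)`, dominated convergence
yields `∫_Ω (θ/ρ)|∇ρ|² = 0`.
-/

open MeasureTheory RealInnerProductSpace

local notation "E" => EuclideanSpace ℝ (Fin 3)

/-- The Laplacian of a scalar field on `ℝ³`. -/
noncomputable def lap (f : E → ℝ) (x : E) : ℝ :=
  ∑ i : Fin 3,
    fderiv ℝ (fun y => fderiv ℝ f y (EuclideanSpace.single i 1)) x (EuclideanSpace.single i 1)

/-- The divergence of a vector field on `ℝ³`. -/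
noncomputable def divg (W : E → E) (x : E) : ℝ :=
  ∑ i : Fin 3, fderiv ℝ (fun y => W y i) x (EuclideanSpace.single i 1)

open Filter Topology

section Gradient

variable {F : Type*} [NormedAddCommGroup F] [InnerProductSpace ℝ F] [CompleteSpace F]

theorem gradient_mul {f g : F → ℝ} {x : F} (hf : DifferentiableAt ℝ f x)
    (hg : DifferentiableAt ℝ g x) :
    gradient (fun y => f y * g y) x = f x • gradient g x + g x • gradient f x := by
  simp [gradient, fderiv_fun_mul hf hg]

theorem smul_add_gradient_eq_of_momentum {K : ℝ} {ρ θ ψ : F → ℝ} {x : F}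
    (hρ : DifferentiableAt ℝ ρ x) (hθ : DifferentiableAt ℝ θ x) (hρx : ρ x ≠ 0)
    (hmom : K • gradient (fun y => ρ y * θ y) x = -(ρ x) • gradient ψ x) :
    K • gradient θ x + gradient ψ x = -(K * θ x / ρ x) • gradient ρ x := by
  rw [gradient_mul hρ hθ] at hmom
  apply smul_right_injective F hρx
  simp only [smul_add, smul_smul]
  rw [show ρ x * -(K * θ x / ρ x) = -(K * θ x) by field_simp]
  linear_combination (norm := module) hmom

end Gradient

section Euclidean

variable {ι : Type*} [Fintype ι] [DecidableEq ι]

theorem EuclideanSpace.gradient_apply (f : EuclideanSpace ℝ ι → ℝ) (x : EuclideanSpace ℝ ι)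
    (i : ι) :
    gradient f x i = fderiv ℝ f x (EuclideanSpace.single i 1) := by
  rw [← inner_gradient_left, EuclideanSpace.inner_single_right]
  simp

theorem ContDiffAt.gradient_euclidean {f : EuclideanSpace ℝ ι → ℝ} {x : EuclideanSpace ℝ ι}
    {n : WithTop ℕ∞}
    (hf : ContDiffAt ℝ (n + 1) f x) : ContDiffAt ℝ n (gradient f) x := by
  refine contDiffAt_euclidean.2 fun i => ?_
  simp only [EuclideanSpace.gradient_apply]
  exact (hf.fderiv_right le_rfl).clm_apply contDiffAt_const

end Euclidean

theorem continuous_lap {f : E → ℝ} (hf : ContDiff ℝ 2 f) : Continuous (lap f) :=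
  continuous_finsetSum _ fun _ _ =>
    (((hf.fderiv_right (m := 1) le_rfl).clm_apply contDiff_const).continuous_fderiv
      one_ne_zero).clm_apply continuous_const


theorem divg_gradient (f : E → ℝ) : divg (gradient f) = lap f := by
  ext x
  simp [divg, lap, EuclideanSpace.gradient_apply]

theorem divg_add {V W : E → E} {x : E} (hV : DifferentiableAt ℝ V x)
    (hW : DifferentiableAt ℝ W x) : divg (V + W) x = divg V x + divg W x := by
  simp only [divg, Pi.add_apply, PiLp.add_apply, ← Finset.sum_add_distrib]
  refine Finset.sum_congr rfl fun i _ => ?_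
  rw [fderiv_fun_add (differentiableAt_euclidean.1 hV i) (differentiableAt_euclidean.1 hW i)]
  rfl

theorem divg_const_smul (c : ℝ) (V : E → E) (x : E) : divg (c • V) x = c * divg V x := by
  simp only [divg, Pi.smul_apply, PiLp.smul_apply, smul_eq_mul, Finset.mul_sum]
  refine Finset.sum_congr rfl fun i _ => ?_
  change fderiv ℝ (c • fun y => V y i) x _ = _
  rw [fderiv_const_smul_field]
  rfl

theorem divg_smul {a : E → ℝ} {V : E → E} {x : E} (ha : DifferentiableAt ℝ a x)
    (hV : DifferentiableAt ℝ V x) :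
    divg (fun y => a y • V y) x = a x * divg V x + fderiv ℝ a x (V x) := by
  rw [← inner_gradient_left, PiLp.inner_apply]
  simp only [divg, PiLp.smul_apply, smul_eq_mul, Finset.mul_sum, ← Finset.sum_add_distrib]
  refine Finset.sum_congr rfl fun i _ => ?_
  rw [fderiv_fun_mul ha (differentiableAt_euclidean.1 hV i), EuclideanSpace.gradient_apply]
  simp

noncomputable def smoothRamp (t : ℝ) : ℝ := t * Real.smoothTransition (t - 1)

namespace smoothRamp

theorem eq_zero_of_le_one {t : ℝ} (ht : t ≤ 1) : smoothRamp t = 0 := by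
  rw [smoothRamp, Real.smoothTransition.zero_of_nonpos (by linarith), mul_zero]

theorem eq_self_of_two_le {t : ℝ} (ht : 2 ≤ t) : smoothRamp t = t := by
  rw [smoothRamp, Real.smoothTransition.one_of_one_le (by linarith), mul_one]

protected theorem contDiff {n : ℕ∞} : ContDiff ℝ n smoothRamp :=
  contDiff_id.mul (Real.smoothTransition.contDiff.comp (contDiff_id.sub contDiff_const))

theorem continuous_deriv : Continuous (deriv smoothRamp) :=
  smoothRamp.contDiff.continuous_deriv (n := 1) le_rfl

theorem deriv_eq_zero_of_lt_one {t : ℝ} (ht : t < 1) : deriv smoothRamp t = 0 := by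
  have : smoothRamp =ᶠ[𝓝 t] fun _ => 0 :=
    (eventually_lt_nhds ht).mono fun s hs => eq_zero_of_le_one (le_of_lt hs)
  rw [this.deriv_eq, deriv_const]

theorem deriv_eq_one_of_two_lt {t : ℝ} (ht : 2 < t) : deriv smoothRamp t = 1 := by
  have : smoothRamp =ᶠ[𝓝 t] id :=
    (eventually_gt_nhds ht).mono fun s hs => eq_self_of_two_le (le_of_lt hs)
  rw [this.deriv_eq, deriv_id]

theorem tendsto_deriv_atTop : Tendsto (deriv smoothRamp) atTop (𝓝 1) :=
  tendsto_const_nhds.congr' <| (eventually_gt_atTop 2).mono fun _ ht =>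
    (deriv_eq_one_of_two_lt ht).symm

theorem exists_abs_deriv_le : ∃ C, ∀ t, |deriv smoothRamp t| ≤ C := by
  obtain ⟨C, hC⟩ := isCompact_Icc.exists_bound_of_continuousOn
    (continuous_deriv.continuousOn (s := Set.Icc 1 2))
  refine ⟨max C 1, fun t => ?_⟩
  rcases lt_or_ge t 1 with ht | ht
  · simp [deriv_eq_zero_of_lt_one ht]
  rcases le_or_gt t 2 with ht' | ht'
  · exact (hC t ⟨ht, ht'⟩).trans (le_max_left _ _)
  · simp [deriv_eq_one_of_two_lt ht']

end smoothRamp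

theorem eq_zero_on_frontier_of_continuous_indicator {X M : Type*} [TopologicalSpace X]
    [TopologicalSpace M] [T2Space M] [Zero M] {Ω : Set X} {f : X → M} (hΩ : IsOpen Ω)
    (hf : ContinuousOn f (closure Ω))
    (hind : Continuous (Ω.indicator f)) {x : X} (hx : x ∈ frontier Ω) : f x = 0 := by
  rw [hΩ.frontier_eq] at hx
  have := mem_closure_iff_nhdsWithin_neBot.1 hx.1
  have hlim : Tendsto f (𝓝[Ω] x) (𝓝 (Ω.indicator f x)) :=
    (hind.continuousWithinAt (s := Ω)).congr' (eventually_nhdsWithin_of_forall fun y hy =>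
      Set.indicator_of_mem hy f)
  rw [Set.indicator_of_notMem hx.2] at hlim
  exact tendsto_nhds_unique ((hf x hx.1).mono_left (nhdsWithin_mono x subset_closure)) hlim

theorem contDiffOn_closure_smoothRamp_smul {X Y : Type*} [NormedAddCommGroup X]
    [NormedSpace ℝ X] [NormedAddCommGroup Y] [NormedSpace ℝ Y] {n : ℕ∞} {Ω : Set X}
    {ρ : X → ℝ} {V : X → Y} (hΩ : IsOpen Ω) (hρ : ContDiffOn ℝ n ρ Ω)
    (hρc : ContinuousOn ρ (closure Ω)) (hρ0 : ∀ x ∈ frontier Ω, ρ x = 0)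
    (hV : ∀ x ∈ Ω, ContDiffAt ℝ n V x) (k : ℝ) :
    ContDiffOn ℝ n (fun y => smoothRamp (k * ρ y) • V y) (closure Ω) := by
  intro x hx
  rw [closure_eq_self_union_frontier] at hx
  rcases hx with hx | hx
  · exact ((smoothRamp.contDiff.contDiffAt.comp x
      (contDiffAt_const.mul ((hρ x hx).contDiffAt (hΩ.mem_nhds hx)))).smul
      (hV x hx)).contDiffWithinAt
  · have hsmall : ∀ᶠ y in 𝓝[closure Ω] x, k * ρ y < 1 := by
      have := ((hρc x (frontier_subset_closure hx)).const_mul k).tendsto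
      rw [hρ0 x hx, mul_zero] at this
      exact this.eventually (gt_mem_nhds one_pos)
    refine (contDiffWithinAt_const (c := (0 : Y))).congr_of_eventuallyEq
      (hsmall.mono fun y hy => ?_) ?_
    · simp [smoothRamp.eq_zero_of_le_one hy.le]
    · simp [hρ0 x hx, smoothRamp.eq_zero_of_le_one]

theorem tendsto_integral_comp_natCast_mul_mul {α : Type*} [MeasurableSpace α] {μ : Measure α}
    {h : ℝ → ℝ} {C : ℝ} {ρ g : α → ℝ} (hh : Continuous h) (hC : ∀ t, |h t| ≤ C)
    (hlim : Tendsto h atTop (𝓝 1)) (hρ : AEStronglyMeasurable ρ μ)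
    (hρpos : ∀ᵐ x ∂μ, 0 < ρ x) (hg : Integrable g μ) :
    Tendsto (fun k : ℕ => ∫ x, h (k * ρ x) * g x ∂μ) atTop (𝓝 (∫ x, g x ∂μ)) := by
  refine tendsto_integral_of_dominated_convergence (fun x => C * ‖g x‖)
    (fun k => (hh.comp_aestronglyMeasurable (hρ.const_mul _)).mul hg.1) (hg.norm.const_mul C)
    (fun k => ae_of_all _ fun x => ?_) (hρpos.mono fun x hx => ?_)
  · rw [norm_mul]
    exact mul_le_mul_of_nonneg_right (hC _) (norm_nonneg _)
  · simpa using (hlim.comp (tendsto_natCast_atTop_atTop.atTop_mul_const hx)).mul_const (g x)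

theorem divg_smoothRamp_smul_of_momentum {K k : ℝ} {ρ θ ψ : E → ℝ} {x : E}
    (hρ : DifferentiableAt ℝ ρ x) (hθ : ContDiffAt ℝ 2 θ x) (hψ : ContDiffAt ℝ 2 ψ x)
    (hρx : ρ x ≠ 0) (hmom : K • gradient (fun y => ρ y * θ y) x = -(ρ x) • gradient ψ x)
    (hlap : K * lap θ x + lap ψ x = 0) :
    divg (fun y => smoothRamp (k * ρ y) • (K • gradient θ y + gradient ψ y)) x
      = -(k * K) * (deriv smoothRamp (k * ρ x) * (θ x / ρ x * ‖gradient ρ x‖ ^ 2)) := by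
  have hgθ : DifferentiableAt ℝ (gradient θ) x :=
    (hθ.gradient_euclidean (n := 1)).differentiableAt one_ne_zero
  have hgψ : DifferentiableAt ℝ (gradient ψ) x :=
    (hψ.gradient_euclidean (n := 1)).differentiableAt one_ne_zero
  have hdivV : divg (fun y => K • gradient θ y + gradient ψ y) x = 0 := by
    change divg (K • gradient θ + gradient ψ) x = 0
    rw [divg_add (hgθ.const_smul K) hgψ, divg_const_smul, divg_gradient, divg_gradient, hlap]
  have hramp : HasFDerivAt (fun y => smoothRamp (k * ρ y))
      (deriv smoothRamp (k * ρ x) • (k • fderiv ℝ ρ x)) x :=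
    (smoothRamp.contDiff (n := 1).differentiable one_ne_zero _).hasDerivAt.comp_hasFDerivAt x
      (hρ.hasFDerivAt.const_mul k)
  rw [divg_smul (V := fun y => K • gradient θ y + gradient ψ y) hramp.differentiableAt
      ((hgθ.const_smul K).add hgψ), hdivV, hramp.fderiv,
    smul_add_gradient_eq_of_momentum hρ (hθ.differentiableAt two_ne_zero) hρx hmom]
  simp only [smul_apply, ← inner_gradient_left, inner_smul_right,
    real_inner_self_eq_norm_sq, smul_eq_mul]
  ring

theorem no_solution_epsilonK_eq_one_general
    (K ε : ℝ) (hεK : ε * K = 1)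
    (Ω : Set E) (hΩo : IsOpen Ω)
    (μ : Measure E) (n : E → E)
    (hdivthm : ∀ W : E → E, ContDiffOn ℝ 1 W (closure Ω) →
      ∫ x in Ω, divg W x = ∫ x in frontier Ω, ⟪W x, n x⟫ ∂μ)
    (ρ θ ψ : E → ℝ)
    (hρ : ContDiffOn ℝ 1 ρ Ω) (hρc : ContinuousOn ρ (closure Ω))
    (hρpos : ∀ x ∈ Ω, 0 < ρ x)
    (hθ : ContDiffOn ℝ 2 θ (closure Ω)) (hψ : ContDiff ℝ 2 ψ)
    (hmom : ∀ x ∈ Ω, K • gradient (fun y => ρ y * θ y) x = -(ρ x) • gradient ψ x)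
    (hheat : ∀ x ∈ Ω, - lap θ x = ε * ρ x)
    (hpois : ∀ x : E, lap ψ x = Set.indicator Ω ρ x)
    (hint : 0 < ∫ x in Ω, (θ x / ρ x) * ‖gradient ρ x‖ ^ 2) :
    False := by
  have hK : K ≠ 0 := right_ne_zero_of_mul_eq_one hεK
  have hρ0 : ∀ x ∈ frontier Ω, ρ x = 0 := fun x =>
    eq_zero_on_frontier_of_continuous_indicator hΩo hρc (funext hpois ▸ continuous_lap hψ)
  have hρx : ∀ x ∈ Ω, DifferentiableAt ℝ ρ x := fun x hx =>
    ((hρ x hx).contDiffAt (hΩo.mem_nhds hx)).differentiableAt one_ne_zero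
  have hθx : ∀ x ∈ Ω, ContDiffAt ℝ 2 θ x := fun x hx =>
    (hθ x (subset_closure hx)).contDiffAt (mem_of_superset (hΩo.mem_nhds hx) subset_closure)
  have hlap : ∀ x ∈ Ω, K * lap θ x + lap ψ x = 0 := fun x hx => by
    rw [hpois, Set.indicator_of_mem hx]
    linear_combination (-K) * hheat x hx - ρ x * hεK
  have hcutoff : ∀ k : ℝ, k ≠ 0 →
      ∫ x in Ω, deriv smoothRamp (k * ρ x) * (θ x / ρ x * ‖gradient ρ x‖ ^ 2) = 0 := by
    intro k hk
    have hflux := hdivthm _ <| contDiffOn_closure_smoothRamp_smul hΩo hρ hρc hρ0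
      (fun x hx => ((hθx x hx).gradient_euclidean.const_smul K).add
        hψ.contDiffAt.gradient_euclidean) k
    rw [setIntegral_eq_zero_of_forall_eq_zero (t := frontier Ω) fun x hx => by
        simp [hρ0 x hx, smoothRamp],
      setIntegral_congr_fun hΩo.measurableSet fun x hx =>
        divg_smoothRamp_smul_of_momentum (hρx x hx) (hθx x hx) hψ.contDiffAt (hρpos x hx).ne'
          (hmom x hx) (hlap x hx),
      integral_const_mul] at hflux
    exact (mul_eq_zero.1 hflux).resolve_left (by simp [hk, hK])
  obtain ⟨C, hC⟩ := smoothRamp.exists_abs_deriv_le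
  have hlim := tendsto_integral_comp_natCast_mul_mul smoothRamp.continuous_deriv hC
    smoothRamp.tendsto_deriv_atTop (hρ.continuousOn.aestronglyMeasurable hΩo.measurableSet)
    ((ae_restrict_iff' hΩo.measurableSet).2 (ae_of_all _ hρpos))
    (Integrable.of_integral_ne_zero hint.ne')
  refine hint.ne' (tendsto_nhds_unique hlim (tendsto_const_nhds.congr' ?_))
  exact (eventually_ge_atTop 1).mono fun k hk => (hcutoff k (by positivity)).symm

/-- Nonexistence for `εK = 1`: suppose `ρ ∈ C¹(Ω) ∩ C(Ω̄)` with `ρ > 0` in `Ω`,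
`θ ∈ C²(Ω̄)`, `ψ ∈ C²(ℝ³)` satisfy `K∇(ρθ) = -ρ∇ψ` in `Ω`, `-Δθ = ερ` in `Ω`, `Δψ = ρ`
in `ℝ³` (with `ρ` extended by zero), with total mass `M > 0` and `εK = 1`, and assume
`∫_Ω (θ/ρ)|∇ρ|² dx > 0` while the boundary trace satisfies `∫_{∂Ω} θ∇ρ·n dS ≤ 0`
(the trace being defined by `θ∇ρ = -ρ∇θ - (ρ/K)∇ψ`, and the boundary data `(μ, n)`
satisfying the divergence theorem).  Then a contradiction follows: no such regular
solution exists. -/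
theorem no_solution_epsilonK_eq_one
    (K ε M : ℝ) (hK : 0 < K) (hε : 0 < ε) (hM : 0 < M) (hεK : ε * K = 1)
    (Ω : Set E) (hΩo : IsOpen Ω) (hΩb : Bornology.IsBounded Ω)
    (μ : Measure E) (n : E → E)
    (hn : ∀ x ∈ frontier Ω, ‖n x‖ = 1)
    (hdivthm : ∀ W : E → E, ContDiffOn ℝ 1 W (closure Ω) →
      ∫ x in Ω, divg W x = ∫ x in frontier Ω, ⟪W x, n x⟫ ∂μ)
    (ρ θ ψ : E → ℝ)
    (hρ : ContDiffOn ℝ 1 ρ Ω) (hρc : ContinuousOn ρ (closure Ω))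
    (hρpos : ∀ x ∈ Ω, 0 < ρ x)
    (hθ : ContDiffOn ℝ 2 θ (closure Ω)) (hψ : ContDiff ℝ 2 ψ)
    (hmom : ∀ x ∈ Ω, K • gradient (fun y => ρ y * θ y) x = -(ρ x) • gradient ψ x)
    (hheat : ∀ x ∈ Ω, - lap θ x = ε * ρ x)
    (hpois : ∀ x : E, lap ψ x = Set.indicator Ω ρ x)
    (hmass : ∫ x in Ω, ρ x = M)
    (hint : 0 < ∫ x in Ω, (θ x / ρ x) * ‖gradient ρ x‖ ^ 2)
    (htrace : ∫ x in frontier Ω,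
        ⟪-(ρ x) • gradient θ x - (ρ x / K) • gradient ψ x, n x⟫ ∂μ ≤ 0) :
    False :=
  no_solution_epsilonK_eq_one_general K ε hεK Ω hΩo μ n hdivthm ρ θ ψ hρ hρc hρpos hθ hψ hmom hheat
    hpois hint
end
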